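/- Let G be a connected finite simple graph of order n and even diameter d ≥ 4 such that every spanning tree of G is a caterpillar of diameter d. Then ξ^c(G) ≥ nd + n + d²/2 − 2d − 1 (which equals ξ^c(V_{n,d}) for the volcano graph V_{n,d}). -/

import Mathlib

/-!
Write `d = 2k` and fix a shortest path `x = u₀, …, u₂ₖ = y` between two vertices at distance
`d`. Any path of `G` extends to a spanning tree, in which it is the unique path between its ends,
so no path of `G` is longer than `2k`. Every vertex has eccentricity at least `k`, with equality
only at common midpoints of `x` and `y`; two adjacent midpoints would give an `x`-`y` path of
length `2k + 1`. Hence `ε(a) + ε(b) ≥ 2k + 1` on every edge `ab`. Now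
`ξ^c(G) = ∑_{ab ∈ E} (ε(a) + ε(b))`: the `2k` edges of the shortest path contribute at least
`∑_{i < 2k} (max(i, 2k - i) + max(i + 1, 2k - i - 1)) = 6k²`, and the at least `n - 1 - 2k`
remaining edges contribute at least `2k + 1` each.
-/

/-- The eccentricity of a vertex `v` in a finite graph `G`:
the maximum distance from `v` to any vertex of `G`. -/
noncomputable def SimpleGraph.ecc {V : Type*} [Fintype V] (G : SimpleGraph V) (v : V) : ℕ :=
  Finset.univ.sup fun u => G.dist v u

/-- The eccentric connectivity index of a finite graph `G`:
`ξ^c(G) = ∑_{v ∈ V(G)} ε(v) · d(v)`. -/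
noncomputable def SimpleGraph.eci {V : Type*} [Fintype V] (G : SimpleGraph V) : ℕ :=
  ∑ v, G.ecc v * Nat.card (G.neighborSet v)


/-- A caterpillar is a tree in which all vertices are within distance one of a
central path. -/
def SimpleGraph.IsCaterpillar {V : Type*} (T : SimpleGraph V) : Prop :=
  T.IsTree ∧ ∃ (k : ℕ) (p : Fin (k + 1) → V), Function.Injective p ∧
    (∀ i : Fin k, T.Adj (p i.castSucc) (p i.succ)) ∧
    ∀ u : V, ∃ i : Fin (k + 1), T.dist u (p i) ≤ 1


section

open Finset

lemma sum_range_max_sub (k : ℕ) : ∑ i ∈ range (2 * k), max i (2 * k - i) = 3 * k ^ 2 := by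
  induction k with
  | zero => simp
  | succ k ih =>
    rw [show 2 * (k + 1) = 2 * k + 1 + 1 by ring, sum_range_succ', sum_range_succ]
    have hshift : ∀ i ∈ range (2 * k), max (i + 1) (2 * k + 1 + 1 - (i + 1)) =
        max i (2 * k - i) + 1 := fun i hi => by
      rw [mem_range] at hi
      omega
    rw [sum_congr rfl hshift, sum_add_distrib, ih, sum_const, card_range, smul_eq_mul]
    have : (k + 1) ^ 2 = k ^ 2 + 2 * k + 1 := by ring
    omega

lemma sum_range_max_sub_add_max_sub (k : ℕ) :
    ∑ i ∈ range (2 * k), (max i (2 * k - i) + max (i + 1) (2 * k - (i + 1))) =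
      6 * k ^ 2 := by
  have hreflect : ∑ i ∈ range (2 * k), max (i + 1) (2 * k - (i + 1)) =
      ∑ i ∈ range (2 * k), max i (2 * k - i) := by
    rw [← sum_range_reflect]
    refine sum_congr rfl fun i hi => ?_
    rw [mem_range] at hi
    omega
  rw [sum_add_distrib, hreflect, sum_range_max_sub]
  ring

end

namespace SimpleGraph

open Finset

variable {V : Type*} {G : SimpleGraph V}

lemma Walk.IsPath.isAcyclic_fromEdgeSet {u v : V} {p : G.Walk u v} (hp : p.IsPath) :
    (fromEdgeSet {e | e ∈ p.edges}).IsAcyclic := by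
  induction p with
  | nil => simp
  | @cons a b c h q ih =>
    rw [Walk.cons_isPath_iff] at hp
    have hnot : ¬ (fromEdgeSet {e | e ∈ q.edges}).Reachable a b := by
      rintro ⟨_ | ⟨hadj, _⟩⟩
      · exact h.ne rfl
      · exact hp.2 (q.fst_mem_support_of_mem_edges ((fromEdgeSet_adj _).1 hadj).1)
    have hset : {e | e ∈ (Walk.cons h q).edges} = {e | e ∈ q.edges} ∪ {s(a, b)} := by
      ext e
      simp
    rw [hset, fromEdgeSet_union]
    exact (ih hp.1).sup_edge_of_not_reachable hnot

lemma IsAcyclic.dist_eq_length {u v : V} (hG : G.IsAcyclic) {p : G.Walk u v} (hp : p.IsPath) :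
    G.dist u v = p.length := by
  obtain ⟨q, hq, hql⟩ := p.reachable.exists_path_of_dist
  have : (⟨q, hq⟩ : G.Path u v) = ⟨p, hp⟩ := (hG.subsingleton_path u v).elim _ _
  rw [← hql]
  exact congrArg (fun P : G.Path u v => P.1.length) this

lemma Connected.exists_isTree_le_dist_eq_length (hG : G.Connected) {u v : V} {p : G.Walk u v}
    (hp : p.IsPath) : ∃ T ≤ G, T.IsTree ∧ T.dist u v = p.length := by
  have hle : fromEdgeSet {e | e ∈ p.edges} ≤ G := fun a b hab =>
    p.adj_of_mem_edges ((fromEdgeSet_adj _).1 hab).1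
  obtain ⟨T, hpT, hTG, hT⟩ := hG.exists_isTree_le_of_le_of_isAcyclic hle hp.isAcyclic_fromEdgeSet
  have hedges : ∀ e ∈ p.edges, e ∈ T.edgeSet := fun e he =>
    edgeSet_mono hpT <| by
      rw [edgeSet_fromEdgeSet]
      exact ⟨he, G.not_isDiag_of_mem_edgeSet (p.edges_subset_edgeSet he)⟩
  refine ⟨T, hTG, hT, ?_⟩
  rw [hT.isAcyclic.dist_eq_length (hp.transfer hedges), Walk.length_transfer]

lemma Connected.length_le_of_forall_isTree_diam_le [Finite V] (hG : G.Connected) {d : ℕ}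
    (hdiam : ∀ T ≤ G, T.IsTree → T.diam ≤ d) {u v : V} {q : G.Walk u v} (hq : q.IsPath) :
    q.length ≤ d := by
  obtain ⟨T, hTG, hT, hTq⟩ := hG.exists_isTree_le_dist_eq_length hq
  have := hG.nonempty
  rw [← hTq]
  exact (T.dist_le_diam (connected_iff_ediam_ne_top.1 hT.connected)).trans (hdiam T hTG hT)

lemma Walk.dist_add_dist_le_length {u v w : V} (p : G.Walk u v) (hw : w ∈ p.support) :
    G.dist u w + G.dist w v ≤ p.length := by
  obtain ⟨q, r, rfl⟩ := Walk.mem_support_iff_exists_append.1 hw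
  rw [Walk.length_append]
  exact add_le_add (dist_le q) (dist_le r)

lemma Walk.dist_getVert_of_length_eq_dist {u v : V} (p : G.Walk u v)
    (hp : p.length = G.dist u v) {i : ℕ} (hi : i ≤ p.length) :
    G.dist u (p.getVert i) = i ∧ G.dist (p.getVert i) v = p.length - i := by
  have htake := dist_le (p.take i)
  have hdrop := dist_le (p.drop i)
  rw [Walk.take_length] at htake
  rw [Walk.drop_length] at hdrop
  have htri := (p.take i).reachable.dist_triangle_left v
  omega

/-- `d(x, a) + d(b, y) ≤ d(x, y)` keeps shortest paths `x ⟶ a` and `b ⟶ y` vertex-disjoint. -/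
lemma Connected.exists_isPath_of_adj (hG : G.Connected) {x y a b : V} (hab : G.Adj a b)
    (h : G.dist x a + G.dist b y ≤ G.dist x y) :
    ∃ p : G.Walk x y, p.IsPath ∧ p.length = G.dist x a + G.dist b y + 1 := by
  obtain ⟨q, hq, hql⟩ := hG.exists_path_of_dist x a
  obtain ⟨r, hr, hrl⟩ := hG.exists_path_of_dist b y
  have hdisj : ∀ z ∈ q.support, z ∉ r.support := by
    intro z hzq hzr
    have h1 := q.dist_add_dist_le_length hzq
    have h2 := r.dist_add_dist_le_length hzr
    have h3 := hG.dist_triangle (u := x) (v := z) (w := y)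
    have hza : G.dist z a = 0 := by omega
    have hbz : G.dist b z = 0 := by omega
    rw [hG.dist_eq_zero_iff] at hza hbz
    exact hab.ne (hbz.trans hza).symm
  refine ⟨q.append (.cons hab r), ?_, by simp [hql, hrl]; omega⟩
  rw [Walk.isPath_def, Walk.support_append, Walk.support_cons, List.tail_cons]
  exact hq.support_nodup.append hr.support_nodup fun z hzq hzr => hdisj z hzq hzr

lemma sum_degree_smul_eq_sum_edgeFinset [Fintype V] [DecidableRel G.Adj] {M : Type*}
    [AddCommMonoid M] (f : V → M) :
    ∑ v, G.degree v • f v =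
      ∑ e ∈ G.edgeFinset, Sym2.lift ⟨fun a b => f a + f b, fun _ _ => add_comm _ _⟩ e := by
  -- not `classical`: the fibres must be decided as in `dart_fst_fiber_card_eq_degree`
  have := Classical.decEq V
  calc ∑ v, G.degree v • f v = ∑ v, ∑ d : G.Dart with d.fst = v, f v := by
        simp only [sum_const, dart_fst_fiber_card_eq_degree]
    _ = ∑ e ∈ G.edgeFinset, ∑ d : G.Dart with d.edge = e, f d.fst := by
        rw [Finset.sum_fiberwise', sum_fiberwise_of_maps_to fun d _ => by simp]
    _ = _ := by
        refine sum_congr rfl fun e he => ?_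
        induction e with
        | h a b =>
          let d : G.Dart := ⟨(a, b), mem_edgeFinset.1 he⟩
          rw [show s(a, b) = d.edge from rfl, Dart.edge_fiber, sum_pair d.symm_ne.symm]
          simp [d, Dart.edge]

lemma Walk.IsPath.injOn_mk_getVert {x y : V} {p : G.Walk x y} (hp : p.IsPath) :
    Set.InjOn (fun i => s(p.getVert i, p.getVert (i + 1))) (range p.length) := by
  intro i hi j hj hij
  simp only [coe_range, Set.mem_Iio] at hi hj
  have hinj {i j : ℕ} (hi : i ≤ p.length) (hj : j ≤ p.length) (h : p.getVert i = p.getVert j) :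
      i = j := hp.getVert_injOn hi hj h
  rcases Sym2.eq_iff.1 hij with ⟨h, -⟩ | ⟨h₁, h₂⟩
  · exact hinj (by omega) (by omega) h
  · have := hinj (by omega) (by omega) h₁
    have := hinj (by omega) (by omega) h₂
    omega

lemma sum_edgeFinset_ge_of_isPath [Fintype V] [DecidableRel G.Adj] [DecidableEq V]
    (F : Sym2 V → ℕ) {c : ℕ} (hc : ∀ e ∈ G.edgeFinset, c ≤ F e) {x y : V} {p : G.Walk x y}
    (hp : p.IsPath) :
    ∑ i ∈ range p.length, F s(p.getVert i, p.getVert (i + 1)) + (#G.edgeFinset - p.length) * c ≤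
      ∑ e ∈ G.edgeFinset, F e := by
  set P := (range p.length).image fun i => s(p.getVert i, p.getVert (i + 1))
  have hPE : P ⊆ G.edgeFinset := by
    simp only [P, image_subset_iff, mem_range, mem_edgeFinset]
    exact fun i hi => p.adj_getVert_succ hi
  have hP : #P = p.length := by rw [card_image_of_injOn hp.injOn_mk_getVert, card_range]
  have hrest : (#G.edgeFinset - p.length) * c ≤ ∑ e ∈ G.edgeFinset \ P, F e := by
    rw [← hP, ← card_sdiff_of_subset hPE, ← smul_eq_mul]
    exact card_nsmul_le_sum _ _ _ fun e he => hc e (mem_sdiff.1 he).1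
  rw [← sum_sdiff hPE, add_comm, ← sum_image hp.injOn_mk_getVert]
  exact add_le_add hrest le_rfl

lemma dist_le_ecc [Fintype V] (G : SimpleGraph V) (v w : V) : G.dist v w ≤ G.ecc v :=
  le_sup (f := fun w => G.dist v w) (mem_univ w)

lemma eci_eq_sum_degree_smul_ecc [Fintype V] (G : SimpleGraph V) [DecidableRel G.Adj] :
    G.eci = ∑ v, G.degree v • G.ecc v := by
  refine sum_congr rfl fun v _ => ?_
  rw [Nat.card_eq_fintype_card, card_neighborSet_eq_degree, smul_eq_mul, mul_comm]

lemma Walk.max_le_ecc_getVert [Fintype V] {x y : V} (p : G.Walk x y)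
    (hp : p.length = G.dist x y) {i : ℕ} (hi : i ≤ p.length) :
    max i (p.length - i) ≤ G.ecc (p.getVert i) := by
  obtain ⟨hx, hy⟩ := p.dist_getVert_of_length_eq_dist hp hi
  have := G.dist_le_ecc (p.getVert i) x
  have := G.dist_le_ecc (p.getVert i) y
  rw [dist_comm] at hx
  omega

lemma two_mul_add_one_le_ecc_add_ecc [Fintype V] (hG : G.Connected) {x y a b : V} {k : ℕ}
    (hxy : G.dist x y = 2 * k)
    (hlong : ∀ ⦃u v : V⦄ (q : G.Walk u v), q.IsPath → q.length ≤ 2 * k) (hab : G.Adj a b) :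
    2 * k + 1 ≤ G.ecc a + G.ecc b := by
  have hax := G.dist_le_ecc a x
  have hay := G.dist_le_ecc a y
  have hbx := G.dist_le_ecc b x
  have hby := G.dist_le_ecc b y
  have hta := hG.dist_triangle (u := x) (v := a) (w := y)
  have htb := hG.dist_triangle (u := x) (v := b) (w := y)
  rw [dist_comm] at hax hbx
  by_contra! h
  obtain ⟨p, hp, hpl⟩ := hG.exists_isPath_of_adj (x := x) (y := y) hab (by omega)
  have := hlong p hp
  omega

lemma sum_degree_smul_ge_of_isPath [Fintype V] [DecidableRel G.Adj] (f : V → ℕ) {c : ℕ}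
    (hc : ∀ ⦃a b : V⦄, G.Adj a b → c ≤ f a + f b) {x y : V} {p : G.Walk x y} (hp : p.IsPath) :
    ∑ i ∈ range p.length, (f (p.getVert i) + f (p.getVert (i + 1))) +
      (#G.edgeFinset - p.length) * c ≤ ∑ v, G.degree v • f v := by
  classical
  rw [sum_degree_smul_eq_sum_edgeFinset]
  refine Eq.trans_le ?_ (sum_edgeFinset_ge_of_isPath (c := c) _ (fun e he => ?_) hp)
  · simp
  · induction e with
    | h a b => exact hc (mem_edgeFinset.1 he)

end SimpleGraph

open SimpleGraph Finset

theorem eci_lower_bound_caterpillar_even_general {V : Type*} [Fintype V]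
    (G : SimpleGraph V) (hG : G.Connected) (n d : ℕ)
    (hn : Fintype.card V = n) (hdiam : G.diam = d) (hde : Even d)
    (hspan : ∀ T : SimpleGraph V, T ≤ G → T.IsTree →
      T.IsCaterpillar ∧ T.diam = d) :
    (G.eci : ℚ) ≥ n * d + n + d ^ 2 / 2 - 2 * d - 1 := by
  classical
  obtain ⟨k, rfl⟩ := hde.two_dvd
  have := hG.nonempty
  obtain ⟨x, y, hxy⟩ := G.exists_dist_eq_diam
  obtain ⟨p, hp, hpl⟩ := hG.exists_path_of_dist x y
  rw [hdiam] at hxy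
  have hlong : ∀ ⦃u v : V⦄ (q : G.Walk u v), q.IsPath → q.length ≤ 2 * k := fun _ _ _ hq =>
    hG.length_le_of_forall_isTree_diam_le (fun T hTG hT => (hspan T hTG hT).2.le) hq
  have hpath : 6 * k ^ 2 ≤
      ∑ i ∈ range p.length, (G.ecc (p.getVert i) + G.ecc (p.getVert (i + 1))) := by
    rw [← sum_range_max_sub_add_max_sub, ← hxy, ← hpl]
    gcongr with i hi <;> rw [mem_range] at hi
    · exact p.max_le_ecc_getVert hpl hi.le
    · exact p.max_le_ecc_getVert hpl hi
  have hbound := sum_degree_smul_ge_of_isPath G.ecc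
    (fun _ _ hab => two_mul_add_one_le_ecc_add_ecc hG hxy hlong hab) hp
  have hE := hG.card_vert_le_card_edgeSet_add_one
  rw [Nat.card_eq_fintype_card, Nat.card_eq_fintype_card, ← edgeFinset_card, hn] at hE
  obtain ⟨m, rfl⟩ : ∃ m, n = 2 * k + 1 + m := ⟨n - (2 * k + 1), by have := hp.length_lt; omega⟩
  have hm : m * (2 * k + 1) ≤ (#G.edgeFinset - p.length) * (2 * k + 1) :=
    Nat.mul_le_mul_right _ (by omega)
  have heci : 6 * k ^ 2 + m * (2 * k + 1) ≤ G.eci := by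
    rw [eci_eq_sum_degree_smul_ecc]
    omega
  rw [← Nat.cast_le (α := ℚ)] at heci
  push_cast at heci ⊢
  linarith

/-- Let `G` be a connected graph of order `n` and even diameter `d ≥ 4` such
that every spanning tree of `G` is a caterpillar of diameter `d`.  Then
`ξ^c(G) ≥ nd + n + d²/2 − 2d − 1` (which equals `ξ^c(V_{n,d})`). -/
theorem eci_lower_bound_caterpillar_even {V : Type*} [Fintype V]
    (G : SimpleGraph V) (hG : G.Connected) (n d : ℕ)
    (hn : Fintype.card V = n) (hdiam : G.diam = d) (hde : Even d) (hd4 : 4 ≤ d)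
    (hspan : ∀ T : SimpleGraph V, T ≤ G → T.IsTree →
      T.IsCaterpillar ∧ T.diam = d) :
    (G.eci : ℚ) ≥ n * d + n + d ^ 2 / 2 - 2 * d - 1 :=
  eci_lower_bound_caterpillar_even_general G hG n d hn hdiam hde hspan
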